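/- Let K be a planar convex body with two boundary points x, y such that the interior angles of K at both x and y are at most π/3. Then the segment xy is a diameter of K, i.e., ‖x − y‖ equals the diameter of K. -/

import Mathlib

open EuclideanGeometry Metric Set

noncomputable section

abbrev E2 := EuclideanSpace ℝ (Fin 2)

/-- The interior angle of a planar convex body `K` at a boundary point `x`:
the angle measure of the tangent cone of `K` at `x`, i.e. the supremum of the
angles `∠ a x b` over points `a, b` of `K` distinct from `x`. -/
noncomputable def interiorAngle (K : Set E2) (x : E2) : ℝ :=
  sSup {θ : ℝ | ∃ a ∈ K, ∃ b ∈ K, a ≠ x ∧ b ≠ x ∧ θ = ∠ a x b}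

/-!
Let `d = ‖x - y‖`. Since `cos ≥ 1/2` on `[0, π/3]`, the law of cosines turns an angle
`∠ a p b ≤ π/3` into `|ab|² ≤ |ap|² + |bp|² - |ap| |bp| ≤ max (|ap|, |bp|)²`. For `a ∈ K`,
the two small angles at `x` and `y` of the triangle `x y a` give, after adding the two
resulting inequalities, `|ax| + |ay| ≤ 2d`, and then `|ax| ≤ d`. Hence `K` lies in the
ball of radius `d` about `x`, and the small angle at `x` bounds every `|ab|`, `a, b ∈ K`,
by `d`.
-/

section EuclideanGeometry

variable {V P : Type*} [NormedAddCommGroup V] [InnerProductSpace ℝ V] [MetricSpace P]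
  [NormedAddTorsor V P]

theorem dist_sq_le_of_angle_le_pi_div_three {a p b : P} (h : ∠ a p b ≤ Real.pi / 3) :
    dist a b ^ 2 ≤ dist a p ^ 2 + dist b p ^ 2 - dist a p * dist b p := by
  have hcos : 1 / 2 ≤ Real.cos (∠ a p b) := by
    rw [← Real.cos_pi_div_three]
    exact Real.cos_le_cos_of_nonneg_of_le_pi (angle_nonneg a p b)
      (by linarith [Real.pi_pos]) h
  nlinarith [law_cos a p b, mul_nonneg (mul_nonneg (dist_nonneg (x := a) (y := p))
    (dist_nonneg (x := b) (y := p))) (sub_nonneg.2 hcos)]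

theorem dist_le_max_of_angle_le_pi_div_three {a p b : P} (h : ∠ a p b ≤ Real.pi / 3) :
    dist a b ≤ max (dist a p) (dist b p) := by
  have hu := le_max_left (dist a p) (dist b p)
  have hv := le_max_right (dist a p) (dist b p)
  have hu₀ : 0 ≤ dist a p := dist_nonneg
  have hv₀ : 0 ≤ dist b p := dist_nonneg
  refine (pow_le_pow_iff_left₀ dist_nonneg (hu₀.trans hu) two_ne_zero).1 ?_
  nlinarith [dist_sq_le_of_angle_le_pi_div_three h, mul_le_mul_of_nonneg_left hu hu₀,
    mul_le_mul_of_nonneg_left hv hv₀, mul_nonneg (sub_nonneg.2 hu) (sub_nonneg.2 hv)]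

theorem dist_le_dist_of_angle_le_pi_div_three_of_angle_le_pi_div_three {x y a : P}
    (hx : ∠ y x a ≤ Real.pi / 3) (hy : ∠ x y a ≤ Real.pi / 3) : dist a x ≤ dist x y := by
  have hd : 0 < dist x y := by
    refine dist_pos.2 fun hxy => ?_
    rw [hxy, angle_self_left] at hx
    linarith [Real.pi_pos]
  have h₁ := dist_sq_le_of_angle_le_pi_div_three hx
  have h₂ := dist_sq_le_of_angle_le_pi_div_three hy
  rw [dist_comm y x, dist_comm y a] at h₁
  rw [dist_comm x a] at h₂
  have hsum : dist a x + dist a y ≤ 2 * dist x y := by nlinarith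
  nlinarith [dist_nonneg (x := a) (y := x), dist_nonneg (x := a) (y := y)]

theorem diam_eq_dist_of_forall_angle_le_pi_div_three {K : Set P} (hK : Bornology.IsBounded K)
    {x y : P} (hx : x ∈ K) (hy : y ∈ K) (hxy : x ≠ y)
    (hangx : ∀ a ∈ K, ∀ b ∈ K, a ≠ x → b ≠ x → ∠ a x b ≤ Real.pi / 3)
    (hangy : ∀ a ∈ K, ∀ b ∈ K, a ≠ y → b ≠ y → ∠ a y b ≤ Real.pi / 3) :
    diam K = dist x y := by
  have hdist : ∀ a ∈ K, dist a x ≤ dist x y := by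
    intro a ha
    rcases eq_or_ne a x with rfl | hax
    · simp
    rcases eq_or_ne a y with rfl | hay
    · exact (dist_comm a x).le
    exact dist_le_dist_of_angle_le_pi_div_three_of_angle_le_pi_div_three
      (hangx y hy a ha hxy.symm hax) (hangy x hx a ha hxy hay)
  refine le_antisymm (diam_le_of_forall_dist_le dist_nonneg fun a ha b hb => ?_)
    (dist_le_diam_of_mem hK hx hy)
  rcases eq_or_ne a x with rfl | hax
  · exact (dist_comm a b).trans_le (hdist b hb)
  rcases eq_or_ne b x with rfl | hbx
  · exact hdist a ha
  exact (dist_le_max_of_angle_le_pi_div_three (hangx a ha b hb hax hbx)).trans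
    (max_le (hdist a ha) (hdist b hb))

end EuclideanGeometry

theorem angle_le_interiorAngle {K : Set E2} {p a b : E2} (ha : a ∈ K) (hb : b ∈ K)
    (hap : a ≠ p) (hbp : b ≠ p) : ∠ a p b ≤ interiorAngle K p :=
  le_csSup ⟨Real.pi, by rintro _ ⟨a, -, b, -, -, -, rfl⟩; exact angle_le_pi a p b⟩
    ⟨a, ha, b, hb, hap, hbp, rfl⟩

theorem diameter_of_two_angles_le_pi_div_three_general
    (K : Set E2) (hcomp : IsCompact K)
    (x y : E2) (hx : x ∈ frontier K) (hy : y ∈ frontier K) (hxy : x ≠ y)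
    (hangx : interiorAngle K x ≤ Real.pi / 3)
    (hangy : interiorAngle K y ≤ Real.pi / 3) :
    dist x y = Metric.diam K := by
  have hsmall : ∀ p, interiorAngle K p ≤ Real.pi / 3 →
      ∀ a ∈ K, ∀ b ∈ K, a ≠ p → b ≠ p → ∠ a p b ≤ Real.pi / 3 :=
    fun p hp a ha b hb hap hbp => (angle_le_interiorAngle ha hb hap hbp).trans hp
  exact (diam_eq_dist_of_forall_angle_le_pi_div_three hcomp.isBounded
    (hcomp.isClosed.frontier_subset hx) (hcomp.isClosed.frontier_subset hy) hxy
    (hsmall x hangx) (hsmall y hangy)).symm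

/-- If a planar convex body has two boundary points with interior angle at most
`π/3` at each, then these points determine a diameter. -/
theorem diameter_of_two_angles_le_pi_div_three
    (K : Set E2) (hcomp : IsCompact K) (hconv : Convex ℝ K)
    (hint : (interior K).Nonempty)
    (x y : E2) (hx : x ∈ frontier K) (hy : y ∈ frontier K) (hxy : x ≠ y)
    (hangx : interiorAngle K x ≤ Real.pi / 3)
    (hangy : interiorAngle K y ≤ Real.pi / 3) :
    dist x y = Metric.diam K :=
  diameter_of_two_angles_le_pi_div_three_general K hcomp x y hx hy hxy hangx hangy
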